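/- arXiv:1407.6409 — 4 statements merged into one kernel-verified Lean document; each statement's English description precedes it below -/
import Mathlib

section
/- Let G be a finite abelian group, M a Z[G]-module, P a finitely generated projective Z[G]-module and j : M → P an injective Z[G]-homomorphism whose cokernel is Z-torsion-free. Then the homomorphism Hom_{Z[G]}(P, Z[G]) → Hom_{Z[G]}(M, Z[G]) given by precomposition with j is surjective. -/
/-! For a finite group `G`, a `ℤ[G]`-linear map `N → ℤ[G]` is determined by its coefficient at `1`,
and every `ℤ`-linear functional `f` on `N` arises in this way, from `x ↦ ∑_g f(g⁻¹ x) g`;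
this correspondence `Hom_{ℤ[G]}(N, ℤ[G]) ≅ Hom_ℤ(N, ℤ)` is natural in `N`. Hence it suffices to
extend `ℤ`-linear functionals along `j`. This is possible because the cokernel of `j` is a finitely
generated torsion-free abelian group, hence free, so `j` splits over `ℤ`. -/

open Function

theorem LinearMap.exists_leftInverse_of_injective_of_projective {R M N : Type*} [Ring R]
    [AddCommGroup M] [AddCommGroup N] [Module R M] [Module R N] (j : M →ₗ[R] N)
    (hj : Injective j) [Module.Projective R (N ⧸ LinearMap.range j)] :
    ∃ l : N →ₗ[R] M, l ∘ₗ j = LinearMap.id := by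
  obtain ⟨s, hs⟩ := Module.projective_lifting_property (LinearMap.range j).mkQ LinearMap.id
    (Submodule.mkQ_surjective _)
  have hexact := LinearMap.exact_map_mkQ_range j
  exact ⟨_, ((hexact.splitInjectiveEquiv (Submodule.mkQ_surjective _)).symm
    (hexact.splitSurjectiveEquiv hj ⟨s, hs⟩)).property⟩

theorem LinearMap.surjective_comp_right_of_injective_of_projective {R M N Q : Type*} [Ring R]
    [AddCommGroup M] [AddCommGroup N] [AddCommGroup Q] [Module R M] [Module R N] [Module R Q]
    (j : M →ₗ[R] N) (hj : Injective j) [Module.Projective R (N ⧸ LinearMap.range j)] :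
    Surjective fun f : N →ₗ[R] Q => f ∘ₗ j := by
  obtain ⟨l, hl⟩ := j.exists_leftInverse_of_injective_of_projective hj
  exact fun f => ⟨f ∘ₗ l, by simp only [LinearMap.comp_assoc, hl, LinearMap.comp_id]⟩

theorem Submodule.isTorsionFree_quotient {R M : Type*} [Ring R] [Nontrivial R] [AddCommGroup M]
    [Module R M] (p : Submodule R M) (hp : ∀ (r : R) (x : M), r ≠ 0 → r • x ∈ p → x ∈ p) :
    Module.IsTorsionFree R (M ⧸ p) := by
  refine .of_smul_eq_zero fun r x hrx => or_iff_not_imp_left.mpr fun hr => ?_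
  induction x using Submodule.Quotient.induction_on with
  | H x =>
    rw [← Submodule.Quotient.mk_smul, Submodule.Quotient.mk_eq_zero] at hrx
    exact (Submodule.Quotient.mk_eq_zero p).mpr (hp r x hr hrx)

namespace MonoidAlgebra

variable {k G : Type*} [CommSemiring k]

variable (k) in
noncomputable def lcoeff (g : G) : MonoidAlgebra k G →ₗ[k] k :=
  Finsupp.lapply g ∘ₗ (coeffLinearEquiv k).toLinearMap

@[simp]
theorem lcoeff_apply (g : G) (x : MonoidAlgebra k G) : lcoeff k g x = x.coeff g := rfl

variable [Group G] [Fintype G] {M N : Type*}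
  [AddCommMonoid M] [Module k M] [Module (MonoidAlgebra k G) M]
  [IsScalarTower k (MonoidAlgebra k G) M] [AddCommMonoid N] [Module k N]
  [Module (MonoidAlgebra k G) N] [IsScalarTower k (MonoidAlgebra k G) N]

/-- The inverse of `φ ↦ lcoeff k 1 ∘ₗ φ`, see `liftFunctional_lcoeff_one_comp`. -/
noncomputable def liftFunctional (f : N →ₗ[k] k) : N →ₗ[MonoidAlgebra k G] MonoidAlgebra k G :=
  equivariantOfLinearOfComm (∑ g : G, lsingle g ∘ₗ f ∘ₗ GroupSMul.linearMap k N g⁻¹) fun h x => by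
    simp only [LinearMap.coe_sum, Finset.sum_apply, LinearMap.comp_apply,
      GroupSMul.linearMap_apply, lsingle_apply, smul_eq_mul, Finset.mul_sum, single_mul_single,
      one_mul, smul_smul]
    rw [← Equiv.sum_comp (Equiv.mulLeft h)]
    simp [mul_assoc]

theorem liftFunctional_apply (f : N →ₗ[k] k) (x : N) :
    liftFunctional (G := G) f x = ∑ g : G, single g (f (single g⁻¹ (1 : k) • x)) := by
  simp [liftFunctional]

theorem liftFunctional_comp (f : N →ₗ[k] k) (j : M →ₗ[MonoidAlgebra k G] N) :
    liftFunctional (f ∘ₗ j.restrictScalars k) = liftFunctional f ∘ₗ j := by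
  ext x
  simp [liftFunctional_apply]

theorem liftFunctional_lcoeff_one_comp (φ : N →ₗ[MonoidAlgebra k G] MonoidAlgebra k G) :
    liftFunctional (lcoeff k 1 ∘ₗ φ.restrictScalars k) = φ := by
  ext x : 1
  classical
  apply coeff_injective
  ext a
  simp [liftFunctional_apply, coeff_sum]

theorem surjective_comp_of_surjective_restrictScalars_comp (j : M →ₗ[MonoidAlgebra k G] N)
    (hj : Surjective fun f : N →ₗ[k] k => f ∘ₗ j.restrictScalars k) :
    Surjective fun φ : N →ₗ[MonoidAlgebra k G] MonoidAlgebra k G => φ ∘ₗ j := by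
  intro φ
  obtain ⟨f, hf⟩ := hj (lcoeff k 1 ∘ₗ φ.restrictScalars k)
  exact ⟨liftFunctional f, by
    dsimp only at hf ⊢
    rw [← liftFunctional_comp, hf, liftFunctional_lcoeff_one_comp]⟩

end MonoidAlgebra

theorem dual_restriction_surjective_of_torsionFree_cokernel_general
    {G : Type*} [CommGroup G] [Fintype G]
    {M P : Type*} [AddCommGroup M] [AddCommGroup P]
    [Module (MonoidAlgebra ℤ G) M] [Module (MonoidAlgebra ℤ G) P]
    [Module.Finite (MonoidAlgebra ℤ G) P]
    (j : M →ₗ[MonoidAlgebra ℤ G] P) (hj : Function.Injective j)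
    (htf : ∀ (p : P) (n : ℤ), n ≠ 0 → n • p ∈ LinearMap.range j → p ∈ LinearMap.range j) :
    Function.Surjective
      (fun g : P →ₗ[MonoidAlgebra ℤ G] MonoidAlgebra ℤ G => g.comp j) := by
  have : Module.Finite ℤ P := .trans (MonoidAlgebra ℤ G) P
  have : Module.IsTorsionFree ℤ (P ⧸ LinearMap.range (j.restrictScalars ℤ)) :=
    Submodule.isTorsionFree_quotient _ fun n p hn hp => htf p n hn hp
  -- the quotient is now `ℤ`-free by `Module.free_of_finite_type_torsion_free'`, hence projective
  exact MonoidAlgebra.surjective_comp_of_surjective_restrictScalars_comp j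
    ((j.restrictScalars ℤ).surjective_comp_right_of_injective_of_projective hj)

/-- Let `G` be a finite abelian group, `M` a `ℤ[G]`-module, `P` a finitely
generated projective `ℤ[G]`-module and `j : M → P` an injective `ℤ[G]`-homomorphism whose
cokernel is `ℤ`-torsion-free.  Then precomposition with `j` gives a surjection
`Hom_{ℤ[G]}(P, ℤ[G]) → Hom_{ℤ[G]}(M, ℤ[G])`. -/
theorem dual_restriction_surjective_of_torsionFree_cokernel
    {G : Type*} [CommGroup G] [Fintype G]
    {M P : Type*} [AddCommGroup M] [AddCommGroup P]
    [Module (MonoidAlgebra ℤ G) M] [Module (MonoidAlgebra ℤ G) P]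
    [Module.Finite (MonoidAlgebra ℤ G) P] [Module.Projective (MonoidAlgebra ℤ G) P]
    (j : M →ₗ[MonoidAlgebra ℤ G] P) (hj : Function.Injective j)
    (htf : ∀ (p : P) (n : ℤ), n ≠ 0 → n • p ∈ LinearMap.range j → p ∈ LinearMap.range j) :
    Function.Surjective
      (fun g : P →ₗ[MonoidAlgebra ℤ G] MonoidAlgebra ℤ G => g.comp j) :=
  dual_restriction_surjective_of_torsionFree_cokernel_general j hj htf
end

section
/- Let G be a finite abelian group, H a subgroup of G, I(H) the augmentation ideal of Z[H] and J an ideal of Z[H]; set J_H := J/I(H)J, 𝒥 := J·Z[G] and 𝒥_H := 𝒥/I(H)𝒥. Then the map Z[G/H] ⊗_Z J_H → 𝒥_H sending τ ⊗ (a mod I(H)J) to the class of τ̃·a in 𝒥_H, for τ ∈ G/H with any lift τ̃ ∈ G and a ∈ J, is a well-defined isomorphism of Z[G/H]-modules. -/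
/-!
Choosing coset representatives gives a `ℤ`-linear map `ℤ[G] → ℤ[G/H] ⊗ ℤ[H]`,
`g ↦ gH ⊗ (out(gH)⁻¹ g)`, which commutes with right multiplication by `ℤ[H]`. Reducing the right
factor modulo `I(H)J` therefore kills `I(H)𝒥` and induces `Φ : 𝒥_H → ℤ[G/H] ⊗ ℤ[H]/I(H)J`.
Composed with the map `F` of the statement, `Φ` is `id ⊗ (J/I(H)J ↪ ℤ[H]/I(H)J)`, which is
injective because `ℤ[G/H]` is free over `ℤ`; so `F` is injective. It is surjective because `𝒥` is
additively spanned by the products `g·a` with `g ∈ G`, `a ∈ J`. That `F` is well defined rests on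
`(σ - 1)·g·a ∈ I(H)𝒥` for `σ ∈ H`.
-/

open TensorProduct

noncomputable section

variable {G : Type*} [CommGroup G] [Fintype G] (H : Subgroup G)

/-- The augmentation ideal `I(H)` of the group ring `ℤ[H]`, i.e. the kernel of the ring
homomorphism `ℤ[H] → ℤ` sending each `σ ∈ H` to `1`. -/
def augIdeal : Ideal (MonoidAlgebra ℤ ↥H) :=
  RingHom.ker (MonoidAlgebra.lift ℤ ℤ ↥H 1)

/-- The natural inclusion of group rings `ℤ[H] → ℤ[G]` for a subgroup `H ≤ G`. -/
def incl : MonoidAlgebra ℤ ↥H →+* MonoidAlgebra ℤ G :=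
  MonoidAlgebra.mapDomainRingHom ℤ H.subtype

/-- `J_H := J / I(H)J`, for an ideal `J` of `ℤ[H]`. -/
abbrev JmodIJ (J : Ideal (MonoidAlgebra ℤ ↥H)) :=
  (↥J) ⧸ ((augIdeal H) • (⊤ : Submodule (MonoidAlgebra ℤ ↥H) ↥J))

/-- `𝒥 := J·ℤ[G]`, the ideal of `ℤ[G]` generated by `J`. -/
abbrev extIdeal (J : Ideal (MonoidAlgebra ℤ ↥H)) : Ideal (MonoidAlgebra ℤ G) :=
  Ideal.map (incl H) J

/-- `𝒥_H := 𝒥 / I(H)𝒥`. -/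
abbrev extIdealModIJ (J : Ideal (MonoidAlgebra ℤ ↥H)) :=
  ↥(extIdeal H J) ⧸
    ((Ideal.map (incl H) (augIdeal H)) •
      (⊤ : Submodule (MonoidAlgebra ℤ G) ↥(extIdeal H J)))


namespace Submodule

variable {S R M N : Type*} [Ring S] [Ring R] [AddCommGroup M] [Module R M] [Module S M] [SMul S R]
  [IsScalarTower S R M] [AddCommGroup N] [Module S N] (p : Submodule R M)

def liftQRestrictScalars (f : M →ₗ[S] N) (h : ∀ x ∈ p, f x = 0) : M ⧸ p →ₗ[S] N :=
  (p.restrictScalars S).liftQ f h ∘ₗ (Quotient.restrictScalarsEquiv S p).symm.toLinearMap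

@[simp]
lemma liftQRestrictScalars_mk (f : M →ₗ[S] N) (h : ∀ x ∈ p, f x = 0) (x : M) :
    p.liftQRestrictScalars f h (Quotient.mk x) = f x :=
  rfl

end Submodule

namespace Ideal

variable {R : Type*} [CommRing R] (P N : Ideal R)

lemma mem_smul_top_iff_mem_mul (x : N) : x ∈ P • (⊤ : Submodule R N) ↔ (x : R) ∈ P * N := by
  rw [Submodule.mem_smul_top_iff, smul_eq_mul]

lemma mk_coe_eq_zero_iff_mem_smul_top (x : N) :
    Quotient.mk (P * N) x = 0 ↔ x ∈ P • (⊤ : Submodule R N) := by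
  rw [Quotient.eq_zero_iff_mem, mem_smul_top_iff_mem_mul]

def quotientSmulTopToQuotientMul : (N ⧸ P • (⊤ : Submodule R N)) →ₗ[R] R ⧸ P * N :=
  Submodule.liftQ _ ((P * N).mkQ ∘ₗ N.subtype) fun x hx =>
    (mk_coe_eq_zero_iff_mem_smul_top P N x).mpr hx

@[simp]
lemma quotientSmulTopToQuotientMul_mk (x : N) :
    quotientSmulTopToQuotientMul P N (Submodule.Quotient.mk x) = Submodule.Quotient.mk (x : R) :=
  rfl

lemma quotientSmulTopToQuotientMul_injective :
    Function.Injective (quotientSmulTopToQuotientMul P N) := by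
  rw [← LinearMap.ker_eq_bot]
  exact Submodule.ker_liftQ_eq_bot _ _ _ fun x hx => (mk_coe_eq_zero_iff_mem_smul_top P N x).mp hx

end Ideal

namespace QuotientGroup

variable {G : Type*} [Group G] (H : Subgroup G)

def outInvMul (g : G) : H :=
  ⟨(g : G ⧸ H).out⁻¹ * g, QuotientGroup.eq.mp (out_eq' _)⟩

lemma outInvMul_mul (g : G) (σ : H) : outInvMul H (g * σ) = outInvMul H g * σ := by
  ext
  simp [outInvMul, mk_mul_of_mem g σ.2, mul_assoc]

end QuotientGroup

namespace MonoidAlgebra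

open scoped Pointwise

lemma ideal_map_restrictScalars_eq_span (k : Type*) [CommSemiring k] {G A : Type*} [Monoid G]
    [Semiring A] (f : A →+* MonoidAlgebra k G) (K : Ideal A) :
    (Ideal.map f K).restrictScalars k = Submodule.span k (Set.range (of k G) • f '' K) := by
  refine (Submodule.span_smul_of_span_eq_top ?_ _).symm
  rw [← (MonoidAlgebra.basis G k).span_eq]
  congr 1

variable (k : Type*) [CommRing k] {G : Type*} [Group G] (H : Subgroup G)

def cosetDecomposition :
    MonoidAlgebra k G →ₗ[k] MonoidAlgebra k (G ⧸ H) ⊗[k] MonoidAlgebra k H :=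
  (MonoidAlgebra.basis G k).constr k fun g =>
    single (g : G ⧸ H) 1 ⊗ₜ of k H (QuotientGroup.outInvMul H g)

lemma cosetDecomposition_single (g : G) (r : k) :
    cosetDecomposition k H (single g r) =
      single (g : G ⧸ H) 1 ⊗ₜ single (QuotientGroup.outInvMul H g) r := by
  rw [← smul_of, map_smul, of_apply, ← basis_apply, cosetDecomposition,
    Module.Basis.constr_basis, ← tmul_smul, smul_of]

lemma cosetDecomposition_of_mul (g : G) (b : MonoidAlgebra k H) :
    cosetDecomposition k H (of k G g * mapDomainRingHom k H.subtype b) =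
      single (g : G ⧸ H) 1 ⊗ₜ (of k H (QuotientGroup.outInvMul H g) * b) := by
  induction b using MonoidAlgebra.induction_linear with
  | zero => simp
  | add b b' hb hb' => simp only [map_add, mul_add, hb, hb', tmul_add]
  | single σ r =>
    simp [of_apply, single_mul_single, cosetDecomposition_single,
      QuotientGroup.outInvMul_mul, QuotientGroup.mk_mul_of_mem g σ.2]

lemma lTensor_mkQ_cosetDecomposition_eq_zero (K : Ideal (MonoidAlgebra k H))
    {z : MonoidAlgebra k G} (hz : z ∈ Ideal.map (mapDomainRingHom k H.subtype) K) :
    LinearMap.lTensor _ (K.mkQ.restrictScalars k) (cosetDecomposition k H z) = 0 := by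
  rw [← Submodule.restrictScalars_mem k, ideal_map_restrictScalars_eq_span] at hz
  induction hz using Submodule.span_induction with
  | mem x hx =>
    obtain ⟨_, ⟨g, rfl⟩, _, ⟨b, hb, rfl⟩, rfl⟩ := hx
    dsimp only
    rw [cosetDecomposition_of_mul, LinearMap.lTensor_tmul, LinearMap.restrictScalars_apply,
      Submodule.mkQ_apply, (Submodule.Quotient.mk_eq_zero K).mpr (K.mul_mem_left _ hb),
      tmul_zero]
  | zero => simp
  | add x y _ _ hx hy => rw [map_add, map_add, hx, hy, add_zero]
  | smul c x _ hx => rw [map_smul, map_smul, hx, smul_zero]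

end MonoidAlgebra

section ExtIdeal

open MonoidAlgebra

variable {G : Type*} [CommGroup G] (H : Subgroup G) (J : Ideal (MonoidAlgebra ℤ H))

lemma of_sub_one_mem_augIdeal (σ : H) : of ℤ H σ - 1 ∈ augIdeal H := by
  simp [augIdeal, RingHom.mem_ker]

lemma incl_of (σ : H) : incl H (of ℤ H σ) = of ℤ G σ := by
  simp [incl, of_apply]

lemma mk_of_mul_eq_mk (σ : H) (a : J) :
    (Submodule.Quotient.mk (of ℤ H σ * a) : MonoidAlgebra ℤ H ⧸ augIdeal H * J) =
      Submodule.Quotient.mk (a : MonoidAlgebra ℤ H) := by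
  rw [Submodule.Quotient.eq, ← sub_one_mul]
  exact Ideal.mul_mem_mul (of_sub_one_mem_augIdeal H σ) a.2

def ofMulIncl (g : G) : J →ₗ[ℤ] extIdeal H J where
  toFun a := ⟨of ℤ G g * incl H a, Ideal.mul_mem_left _ _ (Ideal.mem_map_of_mem (incl H) a.2)⟩
  map_add' a b := by ext; simp [mul_add]
  map_smul' n a := by ext1; simp [mul_left_comm]

lemma ofMulIncl_smul (g : G) (i : MonoidAlgebra ℤ H) (a : J) :
    ofMulIncl H J g (i • a) = incl H i • ofMulIncl H J g a := by
  ext1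
  simp only [ofMulIncl, LinearMap.coe_mk, AddHom.coe_mk, SetLike.val_smul, smul_eq_mul, map_mul]
  ring

lemma of_smul_ofMulIncl (g g' : G) (a : J) :
    of ℤ G g • ofMulIncl H J g' a = ofMulIncl H J (g * g') a := by
  ext
  simp [ofMulIncl, mul_assoc]

lemma mk_ofMulIncl_eq_of_mk_eq {g g' : G} (h : (g : G ⧸ H) = g') (a : J) :
    (Submodule.Quotient.mk (ofMulIncl H J g a) : extIdealModIJ H J) =
      Submodule.Quotient.mk (ofMulIncl H J g' a) := by
  have hσ : g'⁻¹ * g ∈ H := QuotientGroup.eq.mp h.symm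
  have hg : ofMulIncl H J g a = incl H (of ℤ H ⟨_, hσ⟩) • ofMulIncl H J g' a := by
    rw [incl_of, of_smul_ofMulIncl, Subgroup.coe_mk, mul_comm, mul_inv_cancel_left]
  rw [Submodule.Quotient.eq, hg, ← one_smul (MonoidAlgebra ℤ G) (ofMulIncl H J g' a), smul_smul,
    mul_one, ← sub_smul, ← map_one (incl H), ← map_sub]
  exact Submodule.smul_mem_smul (Ideal.mem_map_of_mem _ (of_sub_one_mem_augIdeal H _)) trivial

def ofMulInclMod (g : G) : JmodIJ H J →ₗ[ℤ] extIdealModIJ H J :=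
  Submodule.liftQRestrictScalars _
    ((Ideal.map (incl H) (augIdeal H) • ⊤ : Submodule _ (extIdeal H J)).mkQ.restrictScalars ℤ ∘ₗ
      ofMulIncl H J g)
    fun x hx => by
      refine Submodule.smul_induction_on hx (fun i hi a _ => ?_) fun x y hx hy => ?_
      · simp only [LinearMap.coe_comp, Function.comp_apply, LinearMap.restrictScalars_apply,
          Submodule.mkQ_apply, Submodule.Quotient.mk_eq_zero, ofMulIncl_smul]
        exact Submodule.smul_mem_smul (Ideal.mem_map_of_mem (incl H) hi) Submodule.mem_top
      · rw [map_add, hx, hy, add_zero]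

@[simp]
lemma ofMulInclMod_mk (g : G) (a : J) :
    ofMulInclMod H J g (Submodule.Quotient.mk a) = Submodule.Quotient.mk (ofMulIncl H J g a) :=
  rfl

def tensorToExtIdealModIJ : MonoidAlgebra ℤ (G ⧸ H) ⊗[ℤ] JmodIJ H J →+ extIdealModIJ H J :=
  (TensorProduct.lift <| (basis (G ⧸ H) ℤ).constr ℤ fun τ => ofMulInclMod H J τ.out).toAddMonoidHom

lemma tensorToExtIdealModIJ_of_tmul_mk (g : G) (a : J) :
    tensorToExtIdealModIJ H J (of ℤ (G ⧸ H) g ⊗ₜ Submodule.Quotient.mk a) =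
      Submodule.Quotient.mk (ofMulIncl H J g a) := by
  rw [tensorToExtIdealModIJ, LinearMap.toAddMonoidHom_coe, lift.tmul, of_apply, ← basis_apply,
    Module.Basis.constr_basis, ofMulInclMod_mk,
    mk_ofMulIncl_eq_of_mk_eq H J (QuotientGroup.out_eq' _)]

lemma tensor_jmodIJ_induction_on {P : MonoidAlgebra ℤ (G ⧸ H) ⊗[ℤ] JmodIJ H J → Prop}
    (x : MonoidAlgebra ℤ (G ⧸ H) ⊗[ℤ] JmodIJ H J) (zero : P 0)
    (add : ∀ x y, P x → P y → P (x + y))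
    (of_tmul_mk : ∀ (g : G) (a : J), P (of ℤ (G ⧸ H) g ⊗ₜ Submodule.Quotient.mk a)) : P x := by
  induction x using TensorProduct.induction_on with
  | zero => exact zero
  | add x y hx hy => exact add x y hx hy
  | tmul t y =>
    obtain ⟨a, rfl⟩ := Submodule.Quotient.mk_surjective _ y
    induction t using MonoidAlgebra.induction_linear with
    | zero => simpa using zero
    | add t t' ht ht' => simpa [add_tmul] using add _ _ ht ht'
    | single τ n =>
      obtain ⟨g, rfl⟩ := QuotientGroup.mk_surjective τ
      have h : single (g : G ⧸ H) n ⊗ₜ[ℤ] (Submodule.Quotient.mk a : JmodIJ H J) =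
          of ℤ (G ⧸ H) g ⊗ₜ Submodule.Quotient.mk (n • a) := by
        rw [← smul_of, smul_tmul, Submodule.Quotient.mk_smul]
      simpa [h] using of_tmul_mk g (n • a)

lemma tensorToExtIdealModIJ_of_smul (g : G) (x : MonoidAlgebra ℤ (G ⧸ H) ⊗[ℤ] JmodIJ H J) :
    tensorToExtIdealModIJ H J (of ℤ (G ⧸ H) g • x) = of ℤ G g • tensorToExtIdealModIJ H J x := by
  induction x using tensor_jmodIJ_induction_on H J with
  | zero => rw [smul_zero, map_zero, smul_zero]
  | add x y hx hy => rw [smul_add, map_add, map_add, hx, hy, smul_add]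
  | of_tmul_mk g' a =>
    rw [smul_tmul', smul_eq_mul, ← map_mul, ← QuotientGroup.mk_mul,
      tensorToExtIdealModIJ_of_tmul_mk, tensorToExtIdealModIJ_of_tmul_mk,
      ← Submodule.Quotient.mk_smul, of_smul_ofMulIncl]

def extIdealModIJToTensor :
    extIdealModIJ H J →ₗ[ℤ] MonoidAlgebra ℤ (G ⧸ H) ⊗[ℤ] (MonoidAlgebra ℤ H ⧸ augIdeal H * J) :=
  Submodule.liftQRestrictScalars _
    (LinearMap.lTensor _ ((augIdeal H * J).mkQ.restrictScalars ℤ) ∘ₗ cosetDecomposition ℤ H ∘ₗ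
      (extIdeal H J).subtype.restrictScalars ℤ)
    fun z hz => lTensor_mkQ_cosetDecomposition_eq_zero ℤ H _ <| by
      have h := (Ideal.mem_smul_top_iff_mem_mul _ _ z).mp hz
      rwa [← Ideal.map_mul] at h

lemma extIdealModIJToTensor_tensorToExtIdealModIJ
    (x : MonoidAlgebra ℤ (G ⧸ H) ⊗[ℤ] JmodIJ H J) :
    extIdealModIJToTensor H J (tensorToExtIdealModIJ H J x) =
      LinearMap.lTensor _ ((Ideal.quotientSmulTopToQuotientMul (augIdeal H) J).restrictScalars ℤ)
        x := by
  induction x using tensor_jmodIJ_induction_on H J with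
  | zero => simp only [map_zero]
  | add x y hx hy => simp only [map_add, hx, hy]
  | of_tmul_mk g a =>
    rw [tensorToExtIdealModIJ_of_tmul_mk, extIdealModIJToTensor,
      Submodule.liftQRestrictScalars_mk]
    change LinearMap.lTensor _ _
      (cosetDecomposition ℤ H (of ℤ G g * mapDomainRingHom ℤ H.subtype a)) = _
    rw [cosetDecomposition_of_mul, LinearMap.lTensor_tmul, LinearMap.lTensor_tmul,
      LinearMap.restrictScalars_apply, LinearMap.restrictScalars_apply, Submodule.mkQ_apply,
      mk_of_mul_eq_mk, of_apply, Ideal.quotientSmulTopToQuotientMul_mk]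

lemma tensorToExtIdealModIJ_injective : Function.Injective (tensorToExtIdealModIJ H J) := by
  have h := Module.Flat.lTensor_preserves_injective_linearMap (M := MonoidAlgebra ℤ (G ⧸ H))
    ((Ideal.quotientSmulTopToQuotientMul (augIdeal H) J).restrictScalars ℤ)
    (Ideal.quotientSmulTopToQuotientMul_injective (augIdeal H) J)
  refine .of_comp (f := extIdealModIJToTensor H J) ?_
  convert h using 1
  ext x
  exact extIdealModIJToTensor_tensorToExtIdealModIJ H J x

lemma tensorToExtIdealModIJ_surjective : Function.Surjective (tensorToExtIdealModIJ H J) := by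
  intro q
  obtain ⟨⟨z, hz⟩, rfl⟩ := Submodule.Quotient.mk_surjective _ q
  have hspan := ideal_map_restrictScalars_eq_span ℤ (incl H) J
  have hz' : z ∈ (extIdeal H J).restrictScalars ℤ := hz
  rw [hspan] at hz'
  induction hz' using Submodule.span_induction with
  | mem x hx =>
    obtain ⟨_, ⟨g, rfl⟩, _, ⟨a, ha, rfl⟩, rfl⟩ := hx
    exact ⟨_, tensorToExtIdealModIJ_of_tmul_mk H J g ⟨a, ha⟩⟩
  | zero => exact ⟨0, map_zero _⟩
  | add x y hx hy ihx ihy =>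
    rw [← hspan] at hx hy
    obtain ⟨u, hu⟩ := ihx hx
    obtain ⟨v, hv⟩ := ihy hy
    exact ⟨u + v, by rw [map_add, hu, hv]; rfl⟩
  | smul n x hx ih =>
    rw [← hspan] at hx
    obtain ⟨u, hu⟩ := ih hx
    exact ⟨n • u, by rw [map_zsmul, hu]; rfl⟩

end ExtIdeal

/-- Let `G` be a finite abelian group, `H ≤ G`, `I(H)` the augmentation ideal
of `ℤ[H]` and `J` an ideal of `ℤ[H]`; set `J_H := J/I(H)J`, `𝒥 := J·ℤ[G]` and
`𝒥_H := 𝒥/I(H)𝒥`.  Then the map `ℤ[G/H] ⊗_ℤ J_H → 𝒥_H` sending `τ ⊗ (a mod I(H)J)` to the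
class of `τ̃·a` in `𝒥_H` (for `τ ∈ G/H` with any lift `τ̃ ∈ G` and `a ∈ J`) is a well-defined
isomorphism of `ℤ[G/H]`-modules (an additive isomorphism commuting with the `G`-actions on
the two sides). -/
theorem zgh_tensor_iso_extIdealModIJ (J : Ideal (MonoidAlgebra ℤ ↥H)) :
    ∃ e : (MonoidAlgebra ℤ (G ⧸ H)) ⊗[ℤ] (JmodIJ H J) ≃+ extIdealModIJ H J,
      (∀ (τ : G) (a : ↥J),
        e (MonoidAlgebra.of ℤ (G ⧸ H) ((τ : G ⧸ H)) ⊗ₜ[ℤ] Submodule.Quotient.mk a) =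
          Submodule.Quotient.mk
            (⟨MonoidAlgebra.of ℤ G τ * incl H ↑a,
              Ideal.mul_mem_left _ _ (Ideal.mem_map_of_mem (incl H) a.2)⟩ :
              ↥(extIdeal H J))) ∧
      (∀ (g : G) (x : (MonoidAlgebra ℤ (G ⧸ H)) ⊗[ℤ] (JmodIJ H J)),
        e (MonoidAlgebra.of ℤ (G ⧸ H) ((g : G ⧸ H)) • x) =
          MonoidAlgebra.of ℤ G g • e x) :=
  ⟨AddEquiv.ofBijective (tensorToExtIdealModIJ H J)
      ⟨tensorToExtIdealModIJ_injective H J, tensorToExtIdealModIJ_surjective H J⟩,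
    tensorToExtIdealModIJ_of_tmul_mk H J, tensorToExtIdealModIJ_of_smul H J⟩

end
end

section
/- Let R be a commutative noetherian ring and M a finitely generated R-module. For every integer a ≥ 0 one has Fitt^a_R(M) = Σ_X Fitt^0_R(M/X), where the sum of ideals is taken over all R-submodules X of M that are generated by a elements. -/
/-- The `i`-th Fitting ideal of a module `M` over a commutative ring `R`: for a surjection
`π : R^n → M` it is the ideal generated by the `(n-i) × (n-i)` minors of a relation matrix,
i.e. by the determinants of all `(n-i) × (n-i)` matrices whose columns are relations
(elements of `ker π`) evaluated at `n-i` chosen coordinates.  Since the Fitting ideal is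
independent of the chosen presentation, we may define it as the supremum over all
presentations. -/
noncomputable def fittingIdeal (R : Type*) [CommRing R] (M : Type*) [AddCommGroup M]
    [Module R M] (i : ℕ) : Ideal R :=
  ⨆ (n : ℕ) (π : (Fin n → R) →ₗ[R] M) (_ : Function.Surjective π),
    Ideal.span { d : R | ∃ (ρ : Fin (n - i) → Fin n) (c : Fin (n - i) → (Fin n → R)),
      (∀ b, π (c b) = 0) ∧ d = Matrix.det (Matrix.of fun a b => c b (ρ a)) }

/-- A submodule spanned by a finset of cardinality at most `a` is spanned by the range of a
function `Fin a → M`. -/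
lemma span_finset_eq_span_range {R M : Type*} [CommRing R] [AddCommGroup M] [Module R M]
    (a : ℕ) (t : Finset M) (ht : t.card ≤ a) :
    ∃ f : Fin a → M, Submodule.span R (Set.range f) = Submodule.span R (t : Set M) := by
  classical
  set e := t.equivFin with he
  refine ⟨fun i => if h : (i : ℕ) < t.card then (e.symm ⟨i, h⟩ : M) else 0, ?_⟩
  apply le_antisymm
  · rw [Submodule.span_le]
    rintro x ⟨i, rfl⟩
    dsimp only
    split
    · exact Submodule.subset_span (e.symm ⟨(i : ℕ), ‹_›⟩).2
    · exact (Submodule.span R (t : Set M)).zero_mem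
  · rw [Submodule.span_le]
    intro x hx
    have hx' : x ∈ t := hx
    apply Submodule.subset_span
    refine ⟨⟨(e ⟨x, hx'⟩ : ℕ), lt_of_lt_of_le (e ⟨x, hx'⟩).2 ht⟩, ?_⟩
    dsimp only
    rw [dif_pos (e ⟨x, hx'⟩).2]
    simp

lemma sum_smul_single {R : Type*} [CommRing R] {k : ℕ} (w : Fin k → R) :
    ∑ i, w i • (Pi.single i (1 : R) : Fin k → R) = w := by
  funext j
  rw [Finset.sum_apply]
  simp [Pi.single_apply, Finset.sum_ite_eq']

/-- Let `R` be a commutative noetherian ring and `M` a finitely generated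
`R`-module.  For every integer `a ≥ 0` one has
`Fitt^a_R(M) = Σ_X Fitt^0_R(M/X)`, where the sum of ideals is taken over all `R`-submodules
`X` of `M` that are generated by `a` elements. -/
theorem fittingIdeal_eq_sup_fittingIdeal_quotient
    (R : Type*) [CommRing R] [IsNoetherianRing R]
    (M : Type*) [AddCommGroup M] [Module R M] [Module.Finite R M] (a : ℕ) :
    fittingIdeal R M a =
      ⨆ (X : Submodule R M) (_ : ∃ s : Fin a → M, X = Submodule.span R (Set.range s)),
        fittingIdeal R (M ⧸ X) 0 := by
  classical
  apply le_antisymm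
  · -- LHS ≤ RHS
    refine iSup_le fun n => iSup_le fun π => iSup_le fun hπ => Ideal.span_le.mpr ?_
    rintro d ⟨ρ, c, hc, rfl⟩
    by_cases hinj : Function.Injective ρ
    · -- main case
      set Sset : Finset (Fin n) := Finset.image ρ Finset.univ with hSdef
      have hTcard : Ssetᶜ.card ≤ a := by
        have h1 : Sset.card = n - a := by
          rw [hSdef, Finset.card_image_of_injective _ hinj, Finset.card_univ, Fintype.card_fin]
        have h2 := Finset.card_compl Sset
        rw [Fintype.card_fin, h1] at h2
        omega
      set gens : Finset M := Ssetᶜ.image (fun i => π (Pi.single i 1)) with hgens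
      have hgcard : gens.card ≤ a := le_trans Finset.card_image_le hTcard
      set X := Submodule.span R (gens : Set M) with hXdef
      obtain ⟨s, hs⟩ := span_finset_eq_span_range (R := R) a gens hgcard
      set π' : (Fin (n - a) → R) →ₗ[R] (M ⧸ X) :=
        ∑ b, (LinearMap.proj b).smulRight (X.mkQ (π (Pi.single (ρ b) 1))) with hπ'def
      have hπ'apply : ∀ v, π' v = ∑ b, v b • X.mkQ (π (Pi.single (ρ b) 1)) := by
        intro v
        rw [hπ'def]
        simp [LinearMap.sum_apply, LinearMap.smulRight_apply]
      have hkey : ∀ w : Fin n → R, π' (w ∘ ρ) = X.mkQ (π w) := by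
        intro w
        rw [hπ'apply]
        have h1 : ∑ i ∈ Sset, w i • X.mkQ (π (Pi.single i 1))
            = ∑ b, (w ∘ ρ) b • X.mkQ (π (Pi.single (ρ b) 1)) := by
          rw [hSdef]
          exact Finset.sum_image (fun x _ y _ h => hinj h)
        have h2 : ∑ i ∈ Ssetᶜ, w i • X.mkQ (π (Pi.single i 1)) = 0 := by
          refine Finset.sum_eq_zero fun i hi => ?_
          have : π (Pi.single i 1) ∈ X := by
            apply Submodule.subset_span
            exact Finset.mem_coe.mpr (Finset.mem_image_of_mem _ hi)
          rw [Submodule.mkQ_apply, (Submodule.Quotient.mk_eq_zero X).mpr this, smul_zero]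
        calc ∑ b, (w ∘ ρ) b • X.mkQ (π (Pi.single (ρ b) 1))
            = ∑ i ∈ Sset, w i • X.mkQ (π (Pi.single i 1)) + ∑ i ∈ Ssetᶜ, w i • X.mkQ (π (Pi.single i 1)) := by
              rw [h1, h2, add_zero]
          _ = ∑ i, w i • X.mkQ (π (Pi.single i 1)) := Finset.sum_add_sum_compl _ _
          _ = X.mkQ (π (∑ i, w i • (Pi.single i (1:R) : Fin n → R))) := by
              rw [map_sum, map_sum]
              exact Finset.sum_congr rfl fun i _ => by rw [map_smul, map_smul]
          _ = X.mkQ (π w) := by rw [sum_smul_single]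
      have hsurj' : Function.Surjective π' := by
        intro y
        obtain ⟨x, rfl⟩ := Submodule.mkQ_surjective X y
        obtain ⟨w, rfl⟩ := hπ x
        exact ⟨w ∘ ρ, hkey w⟩
      refine Submodule.mem_iSup_of_mem X (Submodule.mem_iSup_of_mem ⟨s, by rw [hs]⟩ ?_)
      refine Submodule.mem_iSup_of_mem (n - a) (Submodule.mem_iSup_of_mem π'
        (Submodule.mem_iSup_of_mem hsurj' (Ideal.subset_span ?_)))
      refine ⟨fun b => b, fun b => c b ∘ ρ, fun b => ?_, rfl⟩
      rw [hkey, hc b, map_zero]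
    · -- ρ not injective: determinant vanishes
      obtain ⟨i, j, hij, hne⟩ := Function.not_injective_iff.mp hinj
      have hz : Matrix.det (Matrix.of fun a b => c b (ρ a)) = 0 :=
        Matrix.det_zero_of_row_eq hne (funext fun b => by simp [hij])
      rw [hz]
      exact Submodule.zero_mem _
  · -- RHS ≤ LHS
    refine iSup_le fun X => iSup_le fun hX => ?_
    obtain ⟨s, rfl⟩ := hX
    refine iSup_le fun m => iSup_le fun π' => iSup_le fun hπ' => Ideal.span_le.mpr ?_
    rintro d ⟨ρ0, c', hc', rfl⟩
    choose g hg using fun j : Fin m =>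
      Submodule.Quotient.mk_surjective (Submodule.span R (Set.range s)) (π' (Pi.single j 1))
    set u : Fin (m + a) → M := Fin.append g s with hu
    set π : (Fin (m + a) → R) →ₗ[R] M := ∑ i, (LinearMap.proj i).smulRight (u i) with hπdef
    have hπapply : ∀ v, π v = ∑ i, v i • u i := by
      intro v
      rw [hπdef]
      simp [LinearMap.sum_apply, LinearMap.smulRight_apply]
    have happ : ∀ (w : Fin m → R) (t : Fin a → R),
        π (Fin.append w t) = (∑ j, w j • g j) + (∑ k, t k • s k) := by
      intro w t
      rw [hπapply, Fin.sum_univ_add]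
      congr 1
      · exact Finset.sum_congr rfl fun j _ => by rw [hu, Fin.append_left, Fin.append_left]
      · exact Finset.sum_congr rfl fun k _ => by rw [hu, Fin.append_right, Fin.append_right]
    have hmkq : ∀ w : Fin m → R,
        Submodule.Quotient.mk (p := Submodule.span R (Set.range s)) (∑ j, w j • g j) = π' w := by
      intro w
      have : Submodule.Quotient.mk (p := Submodule.span R (Set.range s)) (∑ j, w j • g j)
          = (Submodule.span R (Set.range s)).mkQ (∑ j, w j • g j) := rfl
      rw [this, map_sum]
      calc ∑ j, (Submodule.span R (Set.range s)).mkQ (w j • g j)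
          = ∑ j, w j • π' (Pi.single j 1) := by
            refine Finset.sum_congr rfl fun j _ => ?_
            rw [map_smul, Submodule.mkQ_apply, hg j]
        _ = π' (∑ j, w j • (Pi.single j (1:R) : Fin m → R)) := by
            rw [map_sum]
            exact Finset.sum_congr rfl fun j _ => (map_smul π' _ _).symm
        _ = π' w := by rw [sum_smul_single]
    have hπsurj : Function.Surjective π := by
      intro x
      obtain ⟨w, hw⟩ := hπ' (Submodule.Quotient.mk x)
      have hx : x - ∑ j, w j • g j ∈ Submodule.span R (Set.range s) := by
        rw [← Submodule.Quotient.mk_eq_zero, Submodule.Quotient.mk_sub, hmkq, hw, sub_self]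
      obtain ⟨t, ht⟩ := (Submodule.mem_span_range_iff_exists_fun R).mp hx
      exact ⟨Fin.append w t, by rw [happ, ht, add_sub_cancel]⟩
    have hyb : ∀ b, (∑ j, c' b j • g j) ∈ Submodule.span R (Set.range s) := by
      intro b
      rw [← Submodule.Quotient.mk_eq_zero, hmkq, hc' b]
    choose t ht using fun b => (Submodule.mem_span_range_iff_exists_fun R).mp (hyb b)
    set cc : Fin (m - 0) → (Fin (m + a) → R) := fun b => Fin.append (c' b) (-(t b)) with hcc
    have hccz : ∀ b, π (cc b) = 0 := by
      intro b
      rw [hcc]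
      dsimp only
      rw [happ]
      have : ∑ k, (-(t b)) k • s k = -∑ k, t b k • s k := by
        rw [← Finset.sum_neg_distrib]
        exact Finset.sum_congr rfl fun k _ => by rw [Pi.neg_apply, neg_smul]
      rw [this, ht b, add_neg_cancel]
    have h : m + a - a = m - 0 := by omega
    refine Submodule.mem_iSup_of_mem (m + a) (Submodule.mem_iSup_of_mem π
      (Submodule.mem_iSup_of_mem hπsurj (Ideal.subset_span ?_)))
    refine ⟨fun i => Fin.castAdd a (ρ0 (finCongr h i)), fun b => cc (finCongr h b),
      fun b => hccz _, ?_⟩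
    refine Eq.trans (Matrix.det_submatrix_equiv_self (finCongr h)
      (Matrix.of fun a' b' => c' b' (ρ0 a'))).symm ?_
    congr 1
    ext i j
    simp only [Matrix.submatrix_apply, Matrix.of_apply, hcc]
    rw [Fin.append_left]
end

section
/- Let R be a commutative noetherian ring, M a finitely generated R-module, N a submodule of M, and suppose there is an exact sequence 0 → M' → M → R^{⊕r} → 0 of R-modules with N ⊆ M'. Then for all integers a, b ≥ 0 one has F^{(a,b)}_R(M,N) = F^{(a−r,b)}_R(M',N) if a ≥ r, and F^{(a,b)}_R(M,N) = 0 if a < r. -/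
/-- The relative Fitting ideal `Fitt^{(a,b)}_R(M, N)`, described via
`Fitt^{(a,b)}_R(M,N) = Σ_X Fitt^0_R(M/X)`, the sum of ideals being taken over all submodules
`X` of `M` generated by `a + b` elements `x₁, …, x_{a+b}` with `x₁, …, x_b ∈ N`. -/
noncomputable def relativeFittingIdeal (R : Type*) [CommRing R] (M : Type*) [AddCommGroup M]
    [Module R M] (a b : ℕ) (N : Submodule R M) : Ideal R :=
  ⨆ (X : Submodule R M) (_ : ∃ s : Fin (a + b) → M,
      (∀ i : Fin (a + b), (i : ℕ) < b → s i ∈ N) ∧ X = Submodule.span R (Set.range s)),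
    fittingIdeal R (M ⧸ X) 0


open Function Submodule

namespace FitAux

variable {R : Type*} [CommRing R]
variable {M : Type*} [AddCommGroup M] [Module R M]
variable {M₂ : Type*} [AddCommGroup M₂] [Module R M₂]


/-- Determinants of square matrices of relations of `π`. -/
def relDet {n : ℕ} (π : (Fin n → R) →ₗ[R] M) : Set R :=
  {d | ∃ c : Fin n → (Fin n → R), (∀ b, π (c b) = 0) ∧
    d = Matrix.det (Matrix.of fun a b => c b a)}

noncomputable def J0 {n : ℕ} (π : (Fin n → R) →ₗ[R] M) : Ideal R := Ideal.span (relDet π)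

lemma span_rho_eq {n : ℕ} (π : (Fin n → R) →ₗ[R] M) :
    Ideal.span { d : R | ∃ (ρ : Fin n → Fin n) (c : Fin n → (Fin n → R)),
      (∀ b, π (c b) = 0) ∧ d = Matrix.det (Matrix.of fun a b => c b (ρ a)) } = J0 π := by
  apply le_antisymm
  · rw [Ideal.span_le]
    rintro d ⟨ρ, c, hc, rfl⟩
    by_cases hρ : Function.Injective ρ
    · set σ : Equiv.Perm (Fin n) := Equiv.ofBijective ρ (Finite.injective_iff_bijective.mp hρ)
      have hm : (Matrix.of fun a b => c b (ρ a)) = (Matrix.of fun a b => c b a).submatrix σ id := rfl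
      rw [hm, Matrix.det_permute]
      exact Ideal.mul_mem_left _ _ (Ideal.subset_span ⟨c, hc, rfl⟩)
    · obtain ⟨a₁, a₂, h12, hne⟩ := Function.not_injective_iff.mp hρ
      have hz : Matrix.det (Matrix.of fun a b => c b (ρ a)) = 0 := by
        refine Matrix.det_zero_of_row_eq hne ?_
        funext b
        simp [h12]
      rw [hz]; exact Ideal.zero_mem _
  · rw [J0, Ideal.span_le]
    rintro d ⟨c, hc, rfl⟩
    exact Ideal.subset_span ⟨id, c, hc, rfl⟩

noncomputable def snocMap {m : ℕ} (π : (Fin m → R) →ₗ[R] M) (x : M) :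
    (Fin (m+1) → R) →ₗ[R] M :=
  π.comp (LinearMap.funLeft R R Fin.castSucc) + (LinearMap.proj (Fin.last m)).smulRight x

lemma snocMap_apply {m : ℕ} (π : (Fin m → R) →ₗ[R] M) (x : M) (v : Fin (m+1) → R) :
    snocMap π x v = π (v ∘ Fin.castSucc) + v (Fin.last m) • x := rfl


lemma J0_snocMap {m : ℕ} (π : (Fin m → R) →ₗ[R] M) {x : M} (hx : ∃ w, π w = x) :
    J0 (snocMap π x) = J0 π := by
  obtain ⟨w, hw⟩ := hx
  apply le_antisymm
  · rw [J0, Ideal.span_le]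
    rintro d ⟨c, hc, rfl⟩
    set A : Matrix (Fin (m+1)) (Fin (m+1)) R := Matrix.of fun a b => c b a with hA
    set t : Fin (m+1) → R := fun j => c j (Fin.last m) with ht
    set wext : Fin (m+1) → R := Fin.snoc w 0 with hwext
    set E : Matrix (Fin (m+1)) (Fin (m+1)) R :=
      1 + Matrix.of (fun a b => if b = Fin.last m then
        (if a = Fin.last m then 0 else wext a) else 0) with hE
    have hdetE : E.det = 1 := by
      have htri : E.BlockTriangular id := by
        intro i j hij
        have hij' : (j : Fin (m+1)) < i := hij
        have h1 : (1 : Matrix (Fin (m+1)) (Fin (m+1)) R) i j = 0 :=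
          Matrix.one_apply_ne' (ne_of_lt hij')
        have h2 : j ≠ Fin.last m := by
          intro h; subst h
          exact absurd hij' (not_lt.mpr (Fin.le_last i))
        simp [hE, h1, h2]
      rw [Matrix.det_of_upperTriangular htri]
      apply Finset.prod_eq_one
      intro i _
      by_cases hi : i = Fin.last m <;> simp [hE, hi, Matrix.one_apply]
    set D := E * A with hD
    have hdetD : D.det = A.det := by rw [hD, Matrix.det_mul, hdetE, one_mul]
    set z : Fin (m+1) → (Fin m → R) :=
      fun j => (c j ∘ Fin.castSucc) + t j • w with hz
    have hzker : ∀ j, π (z j) = 0 := by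
      intro j
      have := hc j
      rw [snocMap_apply] at this
      rw [hz]
      simp only [map_add, map_smul]
      rw [hw]
      have : π (c j ∘ Fin.castSucc) = -(c j (Fin.last m) • x) := by
        rw [eq_neg_iff_add_eq_zero]; exact this
      rw [this, ht]
      simp
    have hDrow : ∀ (a : Fin m) (b : Fin (m+1)), D (Fin.castSucc a) b = z b a := by
      intro a b
      rw [hD, Matrix.mul_apply]
      have hsplit : ∀ k, E (Fin.castSucc a) k * A k b =
          (if k = Fin.castSucc a then A k b else 0) +
          (if k = Fin.last m then wext (Fin.castSucc a) * A k b else 0) := by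
        intro k
        have hne : Fin.castSucc a ≠ Fin.last m := (Fin.castSucc_lt_last a).ne
        by_cases h1 : k = Fin.castSucc a
        · subst h1
          simp [hE, Matrix.one_apply, hne, if_neg hne]
        · by_cases h2 : k = Fin.last m
          · subst h2
            simp [hE, Matrix.one_apply, Ne.symm h1, hne, h1]
          · simp [hE, Matrix.one_apply, h1, h2, Ne.symm h1]
      rw [Finset.sum_congr rfl (fun k _ => hsplit k)]
      rw [Finset.sum_add_distrib, Finset.sum_ite_eq' Finset.univ (Fin.castSucc a),
        Finset.sum_ite_eq' Finset.univ (Fin.last m)]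
      simp only [Finset.mem_univ, if_true]
      have : wext (Fin.castSucc a) = w a := by simp [hwext]
      rw [this, hz]
      simp [hA, ht, mul_comm]
    have hDlast : ∀ b, D (Fin.last m) b = t b := by
      intro b
      rw [hD, Matrix.mul_apply]
      have : ∀ k, E (Fin.last m) k * A k b = if k = Fin.last m then A k b else 0 := by
        intro k
        by_cases h1 : k = Fin.last m
        · subst h1; simp [hE, Matrix.one_apply]
        · simp [hE, Matrix.one_apply, Ne.symm h1, h1]
      rw [Finset.sum_congr rfl (fun k _ => this k), Finset.sum_ite_eq' Finset.univ (Fin.last m)]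
      simp [hA, ht]
    have : A.det = D.det := hdetD.symm
    rw [this, Matrix.det_succ_row D (Fin.last m)]
    apply Ideal.sum_mem
    intro j _
    rw [mul_assoc]
    apply Ideal.mul_mem_left
    apply Ideal.mul_mem_left
    apply Ideal.subset_span
    refine ⟨fun b => z (j.succAbove b), fun b => hzker _, ?_⟩
    congr 1
    funext a b
    rw [Matrix.submatrix_apply, Fin.succAbove_last, hDrow]
    rfl
  · rw [J0, Ideal.span_le]
    rintro d ⟨c, hc, rfl⟩
    set c' : Fin (m+1) → (Fin (m+1) → R) :=
      Fin.snoc (fun j => Fin.snoc (c j) 0) (Fin.snoc (-w) 1) with hc'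
    have hker : ∀ b, snocMap π x (c' b) = 0 := by
      intro b
      refine Fin.lastCases ?_ ?_ b
      · rw [snocMap_apply]
        have h1 : c' (Fin.last m) = Fin.snoc (-w) 1 := by simp [hc']
        rw [h1]
        have h2 : (Fin.snoc (-w) 1 : Fin (m+1) → R) ∘ Fin.castSucc = -w := by
          funext i; simp
        have h3 : (Fin.snoc (-w) 1 : Fin (m+1) → R) (Fin.last m) = 1 := by simp
        rw [h2, h3, map_neg, hw]
        simp
      · intro j
        rw [snocMap_apply]
        have h1 : c' (Fin.castSucc j) = Fin.snoc (c j) 0 := by simp [hc']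
        rw [h1]
        have h2 : (Fin.snoc (c j) 0 : Fin (m+1) → R) ∘ Fin.castSucc = c j := by
          funext i; simp
        have h3 : (Fin.snoc (c j) 0 : Fin (m+1) → R) (Fin.last m) = 0 := by simp
        rw [h2, h3, hc j]
        simp
    apply Ideal.subset_span
    refine ⟨c', hker, ?_⟩
    rw [Matrix.det_succ_row (Matrix.of fun a b => c' b a) (Fin.last m)]
    rw [Finset.sum_eq_single (Fin.last m)]
    · have h1 : (Matrix.of fun a b => c' b a) (Fin.last m) (Fin.last m) = 1 := by
        simp [hc']
      rw [h1]
      have h2 : ((-1 : R)) ^ ((Fin.last m : ℕ) + (Fin.last m : ℕ)) = 1 :=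
        Even.neg_one_pow ⟨m, rfl⟩
      rw [h2]
      have h3 : ((Matrix.of fun a b => c' b a).submatrix (Fin.last m).succAbove
          (Fin.last m).succAbove) = Matrix.of fun a b => c b a := by
        funext a b
        rw [Matrix.submatrix_apply, Fin.succAbove_last]
        simp [hc']
      rw [h3]
      ring
    · intro j _ hj
      obtain ⟨j', rfl⟩ := Fin.exists_castSucc_eq.mpr hj
      have : (Matrix.of fun a b => c' b a) (Fin.last m) (Fin.castSucc j') = 0 := by
        simp [hc']
      rw [this]; ring
    · intro h; exact absurd (Finset.mem_univ _) h


noncomputable def extendMap {m : ℕ} (π : (Fin m → R) →ₗ[R] M) :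
    (k : ℕ) → (τ : Fin k → M) → ((Fin (m + k) → R) →ₗ[R] M)
  | 0, _ => π
  | (k+1), τ => snocMap (extendMap π k (fun i => τ i.castSucc)) (τ (Fin.last k))

lemma exists_preimage_extendMap {m : ℕ} (π : (Fin m → R) →ₗ[R] M) (k : ℕ) (τ : Fin k → M)
    {x : M} (hx : ∃ w, π w = x) : ∃ w, extendMap π k τ w = x := by
  induction k with
  | zero => exact hx
  | succ k ih =>
    obtain ⟨w, hw⟩ := ih (fun i => τ i.castSucc)
    refine ⟨Fin.snoc w 0, ?_⟩
    show extendMap π k (fun i => τ i.castSucc) ((Fin.snoc w 0) ∘ Fin.castSucc) +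
      (Fin.snoc w 0 : Fin (m+k+1) → R) (Fin.last (m+k)) • τ (Fin.last k) = x
    have h2 : (Fin.snoc w 0 : Fin (m+k+1) → R) ∘ Fin.castSucc = w := by funext i; simp
    have h3 : (Fin.snoc w 0 : Fin (m+k+1) → R) (Fin.last (m+k)) = 0 := by simp
    rw [h2, h3, hw]; simp

lemma J0_extendMap {m : ℕ} (π : (Fin m → R) →ₗ[R] M) (hπ : Surjective π) (k : ℕ)
    (τ : Fin k → M) : J0 (extendMap π k τ) = J0 π := by
  induction k with
  | zero => rfl
  | succ k ih =>
    rw [extendMap, J0_snocMap, ih]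
    exact exists_preimage_extendMap π k _ (hπ (τ (Fin.last k)))

lemma extendMap_apply {m : ℕ} (π : (Fin m → R) →ₗ[R] M) (k : ℕ) (τ : Fin k → M)
    (v : Fin (m + k) → R) :
    extendMap π k τ v = π (fun i => v (Fin.castAdd k i)) +
      ∑ j : Fin k, v (Fin.natAdd m j) • τ j := by
  induction k with
  | zero =>
    simp only [extendMap, Finset.univ_eq_empty, Finset.sum_empty, add_zero]
    congr 1
  | succ k ih =>
    have key : extendMap π (k+1) τ v = extendMap π k (fun i => τ i.castSucc) (v ∘ Fin.castSucc)
        + v (Fin.last (m+k)) • τ (Fin.last k) := rfl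
    rw [key, ih (fun i => τ i.castSucc) (v ∘ Fin.castSucc)]
    rw [Fin.sum_univ_castSucc (f := fun j : Fin (k+1) => v (Fin.natAdd m j) • τ j)]
    have e1 : (fun i => (v ∘ Fin.castSucc) (Fin.castAdd k i)) =
        (fun i => v (Fin.castAdd (k+1) i)) := by
      funext i; rfl
    have e2 : ∀ j : Fin k, (v ∘ Fin.castSucc) (Fin.natAdd m j) = v (Fin.natAdd m j.castSucc) := by
      intro j; rfl
    have e3 : (Fin.last (m+k)) = Fin.natAdd m (Fin.last k) := rfl
    rw [e1, e3]
    simp_rw [e2]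
    abel

lemma J0_le_extendMap {n n' : ℕ} (π : (Fin n → R) →ₗ[R] M) (π' : (Fin n' → R) →ₗ[R] M)
    (hπ' : Surjective π') :
    J0 π' ≤ J0 (extendMap π n' (fun j => π' (fun i => if j = i then 1 else 0))) := by
  set τ : Fin n' → M := fun j => π' (fun i => if j = i then 1 else 0) with hτ
  have hτsum : ∀ u : Fin n' → R, ∑ j : Fin n', u j • τ j = π' u := by
    intro u
    rw [hτ]
    exact (LinearMap.pi_apply_eq_sum_univ π' u).symm
  rw [J0, Ideal.span_le]
  rintro d ⟨c, hc, rfl⟩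
  choose bb hbb using fun i : Fin n => hπ' (-(π (fun i₂ => if i = i₂ then 1 else 0)))
  set CC : Fin n ⊕ Fin n' → (Fin (n + n') → R) := fun u =>
    Sum.elim (fun i => Fin.addCases (fun i₂ => if i = i₂ then 1 else 0) (bb i))
      (fun j => Fin.addCases (fun _ => 0) (c j)) u with hCC
  have hCCker : ∀ u, extendMap π n' τ (CC u) = 0 := by
    intro u
    rw [extendMap_apply]
    cases u with
    | inl i =>
      have h1 : (fun i₂ => CC (Sum.inl i) (Fin.castAdd n' i₂)) =
          (fun i₂ => if i = i₂ then (1:R) else 0) := by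
        funext i₂; simp [hCC]
      have h2 : (fun j => CC (Sum.inl i) (Fin.natAdd n j)) = bb i := by
        funext j; simp [hCC]
      rw [h1]
      have := hτsum (fun j => CC (Sum.inl i) (Fin.natAdd n j))
      rw [h2] at this
      rw [this, hbb i]
      simp
    | inr j =>
      have h1 : (fun i₂ => CC (Sum.inr j) (Fin.castAdd n' i₂)) = (0 : Fin n → R) := by
        funext i₂; simp [hCC]
      have h2 : (fun j₂ => CC (Sum.inr j) (Fin.natAdd n j₂)) = c j := by
        funext j₂; simp [hCC]
      rw [h1]
      have := hτsum (fun j₂ => CC (Sum.inr j) (Fin.natAdd n j₂))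
      rw [h2] at this
      rw [this, hc j, map_zero]
      simp
  apply Ideal.subset_span
  refine ⟨fun be => CC (finSumFinEquiv.symm be), fun be => hCCker _, ?_⟩
  have hmat : (Matrix.of fun a b => CC (finSumFinEquiv.symm b) a) =
      (Matrix.fromBlocks (1 : Matrix (Fin n) (Fin n) R) 0
        (Matrix.of fun (j : Fin n') (i : Fin n) => bb i j)
        (Matrix.of fun (a : Fin n') (b : Fin n') => c b a)).submatrix
        finSumFinEquiv.symm finSumFinEquiv.symm := by
    funext x y
    obtain ⟨ux, rfl⟩ : ∃ u, finSumFinEquiv u = x := ⟨_, Equiv.apply_symm_apply _ x⟩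
    obtain ⟨uy, rfl⟩ : ∃ u, finSumFinEquiv u = y := ⟨_, Equiv.apply_symm_apply _ y⟩
    simp only [Matrix.submatrix_apply, Equiv.symm_apply_apply, Matrix.of_apply]
    cases ux with
    | inl ax =>
      cases uy with
      | inl iy =>
        simp [hCC, finSumFinEquiv_apply_left, Matrix.one_apply, eq_comm]
      | inr jy =>
        simp [hCC, finSumFinEquiv_apply_left]
    | inr ax =>
      cases uy with
      | inl iy =>
        simp [hCC, finSumFinEquiv_apply_right, finSumFinEquiv_apply_left]
      | inr jy =>
        simp [hCC, finSumFinEquiv_apply_right]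
  rw [hmat, Matrix.det_submatrix_equiv_self, Matrix.det_fromBlocks_zero₁₂]
  simp

lemma J0_eq_J0 {n n' : ℕ} (π : (Fin n → R) →ₗ[R] M) (π' : (Fin n' → R) →ₗ[R] M)
    (hπ : Surjective π) (hπ' : Surjective π') : J0 π = J0 π' := by
  have h1 : ∀ {k k' : ℕ} (f : (Fin k → R) →ₗ[R] M) (f' : (Fin k' → R) →ₗ[R] M),
      Surjective f → Surjective f' → J0 f' ≤ J0 f := by
    intro k k' f f' hf hf'
    refine le_trans (J0_le_extendMap f f' hf') (le_of_eq ?_)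
    exact J0_extendMap f hf k' _
  exact le_antisymm (h1 π' π hπ' hπ) (h1 π π' hπ hπ')


lemma fittingIdeal_zero_eq {n : ℕ} (π : (Fin n → R) →ₗ[R] M) (hπ : Surjective π) :
    fittingIdeal R M 0 = J0 π := by
  apply le_antisymm
  · refine iSup_le fun n' => iSup_le fun π' => iSup_le fun hπ' => ?_
    rw [show (n' - 0) = n' from rfl]
    rw [span_rho_eq π']
    exact le_of_eq (J0_eq_J0 π' π hπ' hπ)
  · refine le_trans ?_ (le_iSup_of_le n (le_iSup_of_le π (le_iSup_of_le hπ le_rfl)))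
    rw [show (n - 0) = n from rfl, span_rho_eq π]

lemma J0_le_fittingIdeal {n : ℕ} (π : (Fin n → R) →ₗ[R] M) (hπ : Surjective π) :
    J0 π ≤ fittingIdeal R M 0 :=
  le_of_eq (fittingIdeal_zero_eq π hπ).symm

lemma fittingIdeal_le_of_equiv (e : M ≃ₗ[R] M₂) (i : ℕ) :
    fittingIdeal R M i ≤ fittingIdeal R M₂ i := by
  refine iSup_le fun n => iSup_le fun π => iSup_le fun hπ => ?_
  refine le_trans (le_of_eq ?_)
    (le_iSup_of_le n (le_iSup_of_le (e.toLinearMap.comp π)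
      (le_iSup_of_le (e.surjective.comp hπ) le_rfl)))
  congr 1
  ext d
  constructor
  · rintro ⟨ρ, c, hc, rfl⟩
    refine ⟨ρ, c, fun b => ?_, rfl⟩
    simp [hc b]
  · rintro ⟨ρ, c, hc, rfl⟩
    refine ⟨ρ, c, fun b => ?_, rfl⟩
    have := hc b
    simp only [LinearMap.coe_comp, comp_apply, LinearEquiv.coe_coe] at this
    exact (LinearEquiv.map_eq_zero_iff e).mp this

lemma fittingIdeal_congr (e : M ≃ₗ[R] M₂) (i : ℕ) :
    fittingIdeal R M i = fittingIdeal R M₂ i :=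
  le_antisymm (fittingIdeal_le_of_equiv e i) (fittingIdeal_le_of_equiv e.symm i)

lemma relativeFittingIdeal_le_of_equiv (e : M ≃ₗ[R] M₂) (a b : ℕ) (N : Submodule R M) :
    relativeFittingIdeal R M a b N ≤ relativeFittingIdeal R M₂ a b (N.map (e : M →ₗ[R] M₂)) := by
  refine iSup_le fun X => iSup_le fun hX => ?_
  obtain ⟨s, hs, rfl⟩ := hX
  have hmap : (span R (Set.range s)).map (e : M →ₗ[R] M₂) =
      span R (Set.range (⇑(e : M →ₗ[R] M₂) ∘ s)) := by
    rw [Submodule.map_span, Set.range_comp]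
  have equot := Submodule.Quotient.equiv (span R (Set.range s))
    (span R (Set.range (⇑(e : M →ₗ[R] M₂) ∘ s))) e hmap
  rw [fittingIdeal_congr equot 0]
  refine le_iSup₂_of_le (span R (Set.range (⇑(e : M →ₗ[R] M₂) ∘ s)))
    ⟨⇑(e : M →ₗ[R] M₂) ∘ s, fun i hi => ?_, rfl⟩ le_rfl
  exact Submodule.mem_map_of_mem (hs i hi)

lemma relativeFittingIdeal_congr (e : M ≃ₗ[R] M₂) (a b : ℕ) (N : Submodule R M) :
    relativeFittingIdeal R M a b N = relativeFittingIdeal R M₂ a b (N.map (e : M →ₗ[R] M₂)) := by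
  refine le_antisymm (relativeFittingIdeal_le_of_equiv e a b N) ?_
  have h2 := relativeFittingIdeal_le_of_equiv e.symm a b (N.map (e : M →ₗ[R] M₂))
  have h3 : (N.map (e : M →ₗ[R] M₂)).map (e.symm : M₂ →ₗ[R] M) = N := by
    ext x
    constructor
    · rintro ⟨y, ⟨z, hz, rfl⟩, rfl⟩
      simpa using hz
    · intro hx
      exact ⟨e x, ⟨x, hx, rfl⟩, by simp⟩
  rwa [h3] at h2


/-- The `a = 0` case of the one-step lemma. -/
lemma one_step_zero (φ₁ : M →ₗ[R] R) (hφ : Surjective φ₁)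
    (N : Submodule R M) (hN : N ≤ LinearMap.ker φ₁) (b : ℕ) :
    relativeFittingIdeal R M 0 b N = ⊥ := by
  refine le_antisymm ?_ bot_le
  refine iSup_le fun X => iSup_le fun hX => ?_
  obtain ⟨s, hs, rfl⟩ := hX
  have hXle : span R (Set.range s) ≤ LinearMap.ker φ₁ := by
    rw [Submodule.span_le]
    rintro x ⟨i, rfl⟩
    exact hN (hs i (by omega))
  set X := span R (Set.range s) with hXdef
  set Φq : (M ⧸ X) →ₗ[R] R := X.liftQ φ₁ hXle with hΦq
  have hΦqs : Surjective Φq := by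
    intro r
    obtain ⟨m, rfl⟩ := hφ r
    exact ⟨X.mkQ m, rfl⟩
  refine iSup_le fun n => iSup_le fun π => iSup_le fun hπ => ?_
  rw [show (n - 0) = n from rfl, span_rho_eq π, J0, Ideal.span_le]
  rintro d ⟨c, hc, rfl⟩
  set Φ : (Fin n → R) →ₗ[R] R := Φq.comp π with hΦ
  obtain ⟨v, hv⟩ : ∃ v, Φ v = 1 := (hΦqs.comp hπ) 1
  set A : Matrix (Fin n) (Fin n) R := Matrix.of fun a b => c b a with hA
  have hcol : ∀ u : Fin n → R, Φ (A.mulVec u) = 0 := by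
    intro u
    have hmv : A.mulVec u = ∑ j, u j • c j := by
      funext i
      rw [Matrix.mulVec]
      simp only [Finset.sum_apply, Pi.smul_apply, smul_eq_mul]
      rw [dotProduct]
      exact Finset.sum_congr rfl fun j _ => by rw [hA]; simp [mul_comm]
    rw [hmv, map_sum]
    refine Finset.sum_eq_zero fun j _ => ?_
    rw [map_smul, hΦ, LinearMap.comp_apply, hc j, map_zero, smul_zero]
  have hsm : A.det • v = A.mulVec ((A.adjugate).mulVec v) := by
    rw [Matrix.mulVec_mulVec, Matrix.mul_adjugate, Matrix.smul_mulVec, Matrix.one_mulVec]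
  have : A.det = 0 := by
    have h1 : Φ (A.det • v) = A.det := by rw [map_smul, hv, smul_eq_mul, mul_one]
    rw [hsm, hcol] at h1
    exact h1.symm
  simp [this]

/-- The `⊇` direction of the one-step lemma. -/
lemma one_step_ge (φ₁ : M →ₗ[R] R) (hφ : Surjective φ₁)
    (N : Submodule R M) (hN : N ≤ LinearMap.ker φ₁) (a' b : ℕ) :
    relativeFittingIdeal R (LinearMap.ker φ₁) a' b
      (N.comap (LinearMap.ker φ₁).subtype) ≤ relativeFittingIdeal R M (a'+1) b N := by
  obtain ⟨e, he⟩ := hφ 1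
  set M' := LinearMap.ker φ₁ with hM'
  refine iSup_le fun X' => iSup_le fun hX' => ?_
  obtain ⟨s', hs', rfl⟩ := hX'
  have hlt : a' + b < a' + 1 + b := by omega
  set s : Fin ((a'+1) + b) → M := fun i =>
    if h : (i:ℕ) < a' + b then ((s' ⟨i, h⟩ : M)) else e with hs
  set X := span R (Set.range s) with hXdef
  have heX : e ∈ X := by
    refine subset_span ⟨⟨a' + b, hlt⟩, ?_⟩
    rw [hs]; simp
  have hrange : Set.range s = (M'.subtype '' Set.range s') ∪ {e} := by
    ext x
    constructor
    · rintro ⟨i, rfl⟩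
      by_cases h : (i : ℕ) < a' + b
      · exact Or.inl ⟨s' ⟨i, h⟩, ⟨⟨i, h⟩, rfl⟩, by rw [hs]; simp [h]⟩
      · right; rw [hs]; simp [h]
    · rintro (⟨y, ⟨j, rfl⟩, rfl⟩ | rfl)
      · refine ⟨⟨(j : ℕ), by omega⟩, ?_⟩
        show (if h : (j:ℕ) < a' + b then ((s' ⟨(j:ℕ), h⟩ : M)) else e) = M'.subtype (s' j)
        rw [dif_pos j.isLt]
        rfl
      · exact ⟨⟨a' + b, hlt⟩, by rw [hs]; simp⟩
  have hXeq : X = (span R (Set.range s')).map M'.subtype ⊔ span R {e} := by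
    rw [hXdef, hrange, Submodule.span_union, Submodule.map_span]
  set f : M' →ₗ[R] (M ⧸ X) := X.mkQ.comp M'.subtype with hf
  have hfsurj : Surjective f := by
    intro q
    obtain ⟨m, rfl⟩ := X.mkQ_surjective q
    have hm : φ₁ (m - φ₁ m • e) = 0 := by
      rw [map_sub, map_smul, he, smul_eq_mul, mul_one, sub_self]
    refine ⟨⟨m - φ₁ m • e, hm⟩, ?_⟩
    rw [hf, LinearMap.comp_apply]
    show X.mkQ (m - φ₁ m • e) = X.mkQ m
    rw [Submodule.mkQ_apply, Submodule.mkQ_apply, Submodule.Quotient.eq]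
    have : m - φ₁ m • e - m = -(φ₁ m • e) := by abel
    rw [this]
    exact neg_mem (Submodule.smul_mem _ _ heX)
  have hfker : LinearMap.ker f = span R (Set.range s') := by
    ext x
    rw [LinearMap.mem_ker, hf, LinearMap.comp_apply]
    rw [show (M'.subtype x) = (x : M) from rfl]
    rw [show (X.mkQ (x : M) = 0) ↔ ((x:M) ∈ X) from Submodule.Quotient.mk_eq_zero X]
    constructor
    · intro hx
      rw [hXeq] at hx
      obtain ⟨y, hy, z, hz, hyz⟩ := Submodule.mem_sup.mp hx
      obtain ⟨y', hy', rfl⟩ := Submodule.mem_map.mp hy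
      obtain ⟨t, rfl⟩ := Submodule.mem_span_singleton.mp hz
      have hyz' : (y' : M) + t • e = (x : M) := hyz
      have h0 : φ₁ (x : M) = 0 := x.2
      have h1 : φ₁ ((y' : M) + t • e) = t := by
        have hy0 : φ₁ (y' : M) = 0 := y'.2
        rw [map_add, hy0, map_smul, he, smul_eq_mul, mul_one, zero_add]
      rw [hyz', h0] at h1
      rw [← h1, zero_smul, add_zero] at hyz'
      have hxy : x = y' := Subtype.ext hyz'.symm
      rw [hxy]
      exact hy'
    · intro hx
      rw [hXeq]
      refine Submodule.mem_sup_left ?_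
      exact Submodule.mem_map_of_mem hx
  have equot : ((M' : Type _) ⧸ (span R (Set.range s'))) ≃ₗ[R] (M ⧸ X) :=
    (Submodule.quotEquivOfEq _ _ hfker.symm).trans (f.quotKerEquivOfSurjective hfsurj)
  rw [fittingIdeal_congr equot 0]
  refine le_iSup₂_of_le X ⟨s, fun i hi => ?_, rfl⟩ le_rfl
  have hib : (i : ℕ) < a' + b := by omega
  rw [hs]
  simp only [dif_pos hib]
  exact hs' ⟨i, hib⟩ hi


/-- The `⊆` direction of the one-step lemma. -/
lemma one_step_le [IsNoetherianRing R] [Module.Finite R M]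
    (φ₁ : M →ₗ[R] R) (hφ : Surjective φ₁)
    (N : Submodule R M) (hN : N ≤ LinearMap.ker φ₁) (a' b : ℕ) :
    relativeFittingIdeal R M (a'+1) b N ≤
      relativeFittingIdeal R (LinearMap.ker φ₁) a' b
        (N.comap (LinearMap.ker φ₁).subtype) := by
  classical
  obtain ⟨e, he⟩ := hφ 1
  set M' := LinearMap.ker φ₁ with hM'
  haveI : IsNoetherian R M := isNoetherian_of_isNoetherianRing_of_finite R M
  haveI : Module.Finite R ↥M' := inferInstance
  obtain ⟨l, p, hp⟩ := Module.Finite.exists_fin' R ↥M'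
  set T := relativeFittingIdeal R ↥M' a' b (N.comap M'.subtype) with hT
  refine iSup_le fun X => iSup_le fun hX => ?_
  obtain ⟨s, hsN, rfl⟩ := hX
  set X := span R (Set.range s) with hXdef
  set v : Fin (a'+1+b) → R := fun i => φ₁ (s i) with hv
  have hv0 : ∀ i : Fin (a'+1+b), (i:ℕ) < b → v i = 0 := by
    intro i hi
    exact hN (hsN i hi)
  have hmmem : ∀ i, s i - v i • e ∈ M' := by
    intro i
    show φ₁ (s i - v i • e) = 0
    rw [map_sub, map_smul, he, smul_eq_mul, mul_one, sub_self]
  set m : Fin (a'+1+b) → ↥M' := fun i => ⟨s i - v i • e, hmmem i⟩ with hm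
  choose μ hμ using fun i => hp (m i)
  -- the presentation of M ⧸ X
  set Ψ : (Fin (l+1) → R) →ₗ[R] M :=
    (M'.subtype.comp (p.comp (LinearMap.funLeft R R Fin.castSucc))) +
      (LinearMap.proj (Fin.last l)).smulRight e with hΨ
  have hΨapp : ∀ u, Ψ u = ((p (u ∘ Fin.castSucc) : M)) + u (Fin.last l) • e := fun u => rfl
  set ψ : (Fin (l+1) → R) →ₗ[R] (M ⧸ X) := X.mkQ.comp Ψ with hψ
  have hψs : Surjective ψ := by
    intro q
    obtain ⟨m₀, rfl⟩ := X.mkQ_surjective q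
    have hm₀ : m₀ - φ₁ m₀ • e ∈ M' := by
      show φ₁ (m₀ - φ₁ m₀ • e) = 0
      rw [map_sub, map_smul, he, smul_eq_mul, mul_one, sub_self]
    obtain ⟨u₀, hu₀⟩ := hp ⟨m₀ - φ₁ m₀ • e, hm₀⟩
    refine ⟨Fin.snoc u₀ (φ₁ m₀), ?_⟩
    rw [hψ, LinearMap.comp_apply, hΨapp]
    have h1 : (Fin.snoc u₀ (φ₁ m₀) : Fin (l+1) → R) ∘ Fin.castSucc = u₀ := by
      funext i; simp
    have h2 : (Fin.snoc u₀ (φ₁ m₀) : Fin (l+1) → R) (Fin.last l) = φ₁ m₀ := by simp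
    rw [h1, h2, hu₀]
    congr 1
    show m₀ - φ₁ m₀ • e + φ₁ m₀ • e = m₀
    simp
  rw [fittingIdeal_zero_eq ψ hψs, J0, Ideal.span_le]
  rintro d ⟨c, hc, rfl⟩
  set t : Fin (l+1) → R := fun j => c j (Fin.last l) with htdef
  have hrel : ∀ j, ∃ lamj : Fin (a'+1+b) → R,
      ∑ i, lamj i • s i = ((p (c j ∘ Fin.castSucc) : M)) + t j • e := by
    intro j
    have := hc j
    rw [hψ, LinearMap.comp_apply] at this
    have hmem : Ψ (c j) ∈ X := (Submodule.Quotient.mk_eq_zero X).mp this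
    rw [hXdef] at hmem
    obtain ⟨lamj, hlamj⟩ := (mem_span_range_iff_exists_fun R).mp hmem
    exact ⟨lamj, by rw [hlamj, hΨapp]⟩
  choose lam hlam using hrel
  have hφlam : ∀ j, ∑ i, lam j i * v i = t j := by
    intro j
    have := congrArg φ₁ (hlam j)
    rw [map_sum, map_add, map_smul, he, smul_eq_mul, mul_one] at this
    have hker : φ₁ ((p (c j ∘ Fin.castSucc) : M)) = 0 := (p (c j ∘ Fin.castSucc)).2
    rw [hker, zero_add] at this
    simpa [hv, smul_eq_mul] using this
  have hmcoe : ∀ j, ((p (c j ∘ Fin.castSucc) : M)) = ∑ i, lam j i • ((m i : M)) := by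
    intro j
    have h1 : ∑ i, lam j i • ((m i : M)) = ∑ i, (lam j i • s i - (lam j i * v i) • e) := by
      refine Finset.sum_congr rfl fun i _ => ?_
      rw [hm]
      show lam j i • (s i - v i • e) = _
      rw [smul_sub, smul_smul]
    rw [h1, Finset.sum_sub_distrib, ← Finset.sum_smul, hφlam, hlam j]
    abel
  -- the vectors
  set G : Fin (a'+1+b) → (Fin (l+1) → R) := fun i => Fin.snoc (μ i) (v i) with hG
  have hGlast : ∀ i, G i (Fin.last l) = v i := by intro i; rw [hG]; simp
  have hGinit : ∀ i i₂, G i (Fin.castSucc i₂) = μ i i₂ := by intro i i₂; rw [hG]; simp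
  set hrw : Fin (l+1) → (Fin (l+1) → R) := fun j => c j - ∑ i, lam j i • G i with hhrw
  have hhlast : ∀ j, hrw j (Fin.last l) = 0 := by
    intro j
    rw [hhrw]
    simp only [Pi.sub_apply, Finset.sum_apply, Pi.smul_apply, smul_eq_mul]
    rw [show c j (Fin.last l) = t j from rfl]
    rw [sub_eq_zero]
    rw [← hφlam j]
    exact Finset.sum_congr rfl fun i _ => by rw [hGlast]
  have hph : ∀ j, p (fun i₂ => hrw j (Fin.castSucc i₂)) = 0 := by
    intro j
    have harg : (fun i₂ => hrw j (Fin.castSucc i₂)) =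
        (c j ∘ Fin.castSucc) - ∑ i, lam j i • μ i := by
      funext i₂
      rw [hhrw]
      simp only [Pi.sub_apply, Finset.sum_apply, Pi.smul_apply, comp_apply]
      rw [sub_right_inj]
      exact Finset.sum_congr rfl fun i _ => by rw [hGinit]
    rw [harg, map_sub]
    have h2 : p (∑ i, lam j i • μ i) = ∑ i, lam j i • m i := by
      rw [map_sum]
      exact Finset.sum_congr rfl fun i _ => by rw [map_smul, hμ]
    rw [h2]
    apply Subtype.coe_injective
    push_cast
    rw [hmcoe j]
    simp
  -- multilinear expansion
  set B : Fin (l+1) → Option (Fin (a'+1+b)) → (Fin (l+1) → R) :=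
    fun j o => o.elim (hrw j) (fun i => lam j i • G i) with hB
  have hrowsum : ∀ j, c j = ∑ o : Option (Fin (a'+1+b)), B j o := by
    intro j
    rw [Fintype.sum_option]
    rw [hB]
    simp only [Option.elim]
    rw [hhrw]
    exact (sub_add_cancel _ _).symm
  set f := (Matrix.detRowAlternating : (Fin (l+1) → R) [⋀^Fin (l+1)]→ₗ[R] R) with hf
  have hdet : Matrix.det (Matrix.of fun a b => c b a) = f (fun j => c j) := by
    rw [← Matrix.det_transpose]
    rfl
  rw [hdet]
  have hexp : f (fun j => c j) =
      ∑ κ : (Fin (l+1) → Option (Fin (a'+1+b))), f (fun j => B j (κ j)) := by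
    rw [show (fun j => c j) = (fun j => ∑ o : Option (Fin (a'+1+b)), B j o) from
      funext hrowsum]
    exact f.toMultilinearMap.map_sum B
  rw [hexp]
  apply Ideal.sum_mem
  intro κ _
  set coefO : Fin (l+1) → R := fun j => (κ j).elim 1 (lam j) with hcoefO
  set Rows : Fin (l+1) → (Fin (l+1) → R) := fun j => (κ j).elim (hrw j) G with hRows
  have hsplit : (fun j => B j (κ j)) = fun j => (coefO j) • Rows j := by
    funext j
    rw [hB, hcoefO, hRows]
    cases hj : κ j <;> simp [hj]
  rw [hsplit]
  have hms : f (fun j => coefO j • Rows j) = (∏ j, coefO j) • f Rows :=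
    f.toMultilinearMap.map_smul_univ coefO Rows
  rw [hms]
  apply Submodule.smul_mem
  -- now f Rows ∈ T
  by_cases hdup : ∃ j j', j ≠ j' ∧ κ j ≠ none ∧ κ j = κ j'
  · obtain ⟨j, j', hne, hnn, heq⟩ := hdup
    obtain ⟨i0, hi0⟩ := Option.ne_none_iff_exists'.mp hnn
    have hRR : Rows j = Rows j' := by
      show (κ j).elim (hrw j) G = (κ j').elim (hrw j') G
      rw [← heq, hi0]
      rfl
    have h0 : f Rows = 0 := Matrix.det_zero_of_row_eq hne hRR
    rw [h0]
    exact Ideal.zero_mem T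
  by_cases hall : ∀ j, κ j = none
  · have h0 : f Rows = 0 := by
      apply Matrix.det_eq_zero_of_column_eq_zero (Fin.last l)
      intro j
      show (κ j).elim (hrw j) G (Fin.last l) = 0
      rw [hall j]
      exact hhlast j
    rw [h0]
    exact Ideal.zero_mem T
  -- injective case
  have hinj : ∀ j j', κ j ≠ none → κ j = κ j' → j = j' := by
    intro j j' hnn heq
    by_contra hne
    exact hdup ⟨j, j', hne, hnn, heq⟩
  have hfdet : f Rows = Matrix.det (Matrix.of Rows) := rfl
  rw [hfdet, Matrix.det_succ_column (Matrix.of Rows) (Fin.last l)]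
  apply Ideal.sum_mem
  intro j _
  cases hκj : κ j with
  | none =>
    have hzero : Matrix.of Rows j (Fin.last l) = 0 := by
      show (κ j).elim (hrw j) G (Fin.last l) = 0
      rw [hκj]; exact hhlast j
    rw [hzero, mul_zero, zero_mul]
    exact Ideal.zero_mem T
  | some i₀ =>
    have hentry : Matrix.of Rows j (Fin.last l) = v i₀ := by
      show (κ j).elim (hrw j) G (Fin.last l) = v i₀
      rw [hκj]; exact hGlast i₀
    by_cases hib : (i₀ : ℕ) < b
    · rw [hentry, hv0 i₀ hib, mul_zero, zero_mul]
      exact Ideal.zero_mem T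
    -- main case
    push_neg at hib
    have hi₀lt : (i₀ : ℕ) < a' + 1 + b := i₀.isLt
    set σ : Fin (a'+b) → Fin (a'+1+b) := fun q =>
      ⟨if (q:ℕ) < (i₀:ℕ) then (q:ℕ) else (q:ℕ)+1, by
        by_cases hq : (q:ℕ) < (i₀:ℕ) <;> simp [hq] <;> omega⟩ with hσ
    set s'' : Fin (a'+b) → ↥M' := fun q => m (σ q) with hs''
    set X'' := span R (Set.range s'') with hX''
    have hσval : ∀ q : Fin (a'+b), ((σ q) : ℕ) =
        if (q:ℕ) < (i₀:ℕ) then (q:ℕ) else (q:ℕ)+1 := fun q => rfl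
    have hcov : ∀ i : Fin (a'+1+b), i ≠ i₀ → m i ∈ X'' := by
      intro i hi
      have hvne : (i:ℕ) ≠ (i₀:ℕ) := fun h => hi (Fin.ext h)
      by_cases hlt : (i:ℕ) < (i₀:ℕ)
      · have hq : σ ⟨(i:ℕ), by omega⟩ = i := by
          apply Fin.ext
          rw [hσval]
          show (if (i:ℕ) < (i₀:ℕ) then (i:ℕ) else (i:ℕ)+1) = (i:ℕ)
          rw [if_pos hlt]
        refine subset_span ⟨⟨(i:ℕ), by omega⟩, ?_⟩
        show m (σ ⟨(i:ℕ), _⟩) = m i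
        rw [hq]
      · have hgt : (i₀:ℕ) < (i:ℕ) := by omega
        have hq : σ ⟨(i:ℕ) - 1, by omega⟩ = i := by
          apply Fin.ext
          rw [hσval]
          show (if (i:ℕ)-1 < (i₀:ℕ) then (i:ℕ)-1 else (i:ℕ)-1+1) = (i:ℕ)
          rw [if_neg (by omega)]
          omega
        refine subset_span ⟨⟨(i:ℕ) - 1, by omega⟩, ?_⟩
        show m (σ ⟨(i:ℕ) - 1, _⟩) = m i
        rw [hq]
    set pbar : (Fin l → R) →ₗ[R] (↥M' ⧸ X'') := X''.mkQ.comp p with hpbar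
    have hpbars : Surjective pbar := by
      intro q
      obtain ⟨y, rfl⟩ := X''.mkQ_surjective q
      obtain ⟨u, hu⟩ := hp y
      exact ⟨u, by rw [hpbar, LinearMap.comp_apply, hu]⟩
    -- the minor
    set minor := (Matrix.of Rows).submatrix j.succAbove (Fin.last l).succAbove with hminor
    have hminormem : minor.det ∈ T := by
      set cc : Fin l → (Fin l → R) := fun q => fun a => Rows (j.succAbove q) (Fin.castSucc a)
        with hcc
      have hccker : ∀ q, pbar (cc q) = 0 := by
        intro q
        cases hκq : κ (j.succAbove q) with
        | none =>
          have hcq : cc q = fun i₂ => hrw (j.succAbove q) (Fin.castSucc i₂) := by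
            funext a
            show (κ (j.succAbove q)).elim (hrw (j.succAbove q)) G (Fin.castSucc a) = _
            rw [hκq]
            rfl
          rw [hcq, hpbar, LinearMap.comp_apply, hph, map_zero]
        | some i' =>
          have hcceq : cc q = μ i' := by
            funext a
            show (κ (j.succAbove q)).elim (hrw (j.succAbove q)) G (Fin.castSucc a) = _
            rw [hκq]
            exact hGinit i' a
          have hi'ne : i' ≠ i₀ := by
            intro hcontra
            subst hcontra
            have : j.succAbove q = j := hinj _ _ (by rw [hκq]; simp) (by rw [hκq, hκj])
            exact Fin.succAbove_ne j q this
          rw [hcceq, hpbar, LinearMap.comp_apply, hμ]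
          rw [Submodule.mkQ_apply, Submodule.Quotient.mk_eq_zero]
          exact hcov i' hi'ne
      have hdetcc : minor.det = Matrix.det (Matrix.of fun a b => cc b a) := by
        rw [← Matrix.det_transpose minor]
        congr 1
        funext a q
        rw [Matrix.transpose_apply, hminor, Matrix.submatrix_apply, Fin.succAbove_last]
        rfl
      have : minor.det ∈ J0 pbar := by
        rw [J0]
        exact Ideal.subset_span ⟨cc, hccker, hdetcc⟩
      refine le_trans (J0_le_fittingIdeal pbar hpbars) ?_ this
      rw [hT]
      refine le_iSup₂_of_le X'' ⟨s'', fun q hq => ?_, rfl⟩ le_rfl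
      -- s'' q ∈ N.comap subtype for q < b
      have hqi : (σ q : ℕ) = (q : ℕ) := by
        rw [hσ]
        simp [show (q:ℕ) < (i₀:ℕ) by omega]
      have hσqb : ((σ q) : ℕ) < b := by omega
      show ((m (σ q) : M)) ∈ N
      have : ((m (σ q) : M)) = s (σ q) := by
        rw [hm]
        show s (σ q) - v (σ q) • e = s (σ q)
        rw [hv0 _ hσqb, zero_smul, sub_zero]
      rw [this]
      exact hsN _ hσqb
    rw [mul_assoc]
    exact Ideal.mul_mem_left _ _ (Ideal.mul_mem_left _ _ hminormem)


universe u v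

theorem main_aux (R : Type u) [CommRing R] [IsNoetherianRing R] (r : ℕ) :
    ∀ (M : Type v) [AddCommGroup M] [Module R M], ∀ [Module.Finite R M],
      ∀ (N : Submodule R M) (φ : M →ₗ[R] (Fin r → R)), Surjective φ →
      N ≤ LinearMap.ker φ → ∀ a b : ℕ,
      (r ≤ a → relativeFittingIdeal R M a b N =
        relativeFittingIdeal R (LinearMap.ker φ) (a - r) b
          (N.comap (LinearMap.ker φ).subtype)) ∧
      (a < r → relativeFittingIdeal R M a b N = ⊥) := by
  induction r with
  | zero =>
    intro M _ _ _ N φ hφ hN a b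
    refine ⟨fun _ => ?_, fun h => absurd h (by omega)⟩
    have hker : LinearMap.ker φ = ⊤ := by
      ext x
      simp only [LinearMap.mem_ker, Submodule.mem_top, iff_true]
      exact Subsingleton.elim _ _
    set E : M ≃ₗ[R] ↥(LinearMap.ker φ) :=
      Submodule.topEquiv.symm.trans (LinearEquiv.ofEq ⊤ (LinearMap.ker φ) hker.symm) with hE
    have hmap : N.map (E : M →ₗ[R] ↥(LinearMap.ker φ)) =
        N.comap (LinearMap.ker φ).subtype := by
      ext x
      simp only [Submodule.mem_map, Submodule.mem_comap]
      constructor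
      · rintro ⟨y, hy, rfl⟩
        exact hy
      · intro hx
        exact ⟨(x : M), hx, Subtype.ext rfl⟩
    rw [Nat.sub_zero, ← hmap]
    exact relativeFittingIdeal_congr E a b N
  | succ r ih =>
    intro M _ _ _ N φ hφ hN a b
    haveI : IsNoetherian R M := isNoetherian_of_isNoetherianRing_of_finite R M
    set φ₁ : M →ₗ[R] R := (LinearMap.proj (Fin.last r)).comp φ with hφ₁
    have hφ₁s : Surjective φ₁ := by
      intro y
      obtain ⟨x, hx⟩ := hφ (fun _ => y)
      exact ⟨x, by rw [hφ₁, LinearMap.comp_apply, hx]; rfl⟩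
    set M₁ := LinearMap.ker φ₁ with hM₁
    have hNM₁ : N ≤ M₁ := by
      intro x hx
      have h0 : φ x = 0 := hN hx
      show φ₁ x = 0
      rw [hφ₁, LinearMap.comp_apply, h0]
      rfl
    haveI : Module.Finite R ↥M₁ := inferInstance
    set φ' : ↥M₁ →ₗ[R] (Fin r → R) :=
      (LinearMap.funLeft R R Fin.castSucc).comp (φ.comp M₁.subtype) with hφ'
    have hφ'app : ∀ x : ↥M₁, φ' x = fun i => φ (x : M) (Fin.castSucc i) := fun x => rfl
    have hφ's : Surjective φ' := by
      intro w
      obtain ⟨x, hx⟩ := hφ (Fin.snoc w 0)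
      have hxM₁ : x ∈ M₁ := by
        show φ₁ x = 0
        rw [hφ₁, LinearMap.comp_apply, hx]
        show (Fin.snoc w 0 : Fin (r+1) → R) (Fin.last r) = 0
        simp
      refine ⟨⟨x, hxM₁⟩, ?_⟩
      rw [hφ'app]
      funext i
      show φ x (Fin.castSucc i) = w i
      rw [hx]
      simp
    set N₁ := N.comap M₁.subtype with hN₁
    have hN₁le : N₁ ≤ LinearMap.ker φ' := by
      rintro ⟨x, hxM⟩ hx
      have h0 : φ x = 0 := hN hx
      show φ' ⟨x, hxM⟩ = 0
      rw [hφ'app]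
      funext i
      rw [h0]
      rfl
    -- the equivalence ker φ' ≃ ker φ
    have hval : ∀ x : ↥(LinearMap.ker φ'), φ (((x : ↥M₁) : M)) = 0 := by
      rintro ⟨⟨x, hx1⟩, hx2⟩
      funext i
      refine Fin.lastCases ?_ ?_ i
      · exact hx1
      · intro i
        have := congrFun (show φ' ⟨x, hx1⟩ = 0 from hx2) i
        exact this
    have hval2 : ∀ y : ↥(LinearMap.ker φ), φ₁ (y : M) = 0 := by
      rintro ⟨y, hy⟩
      show φ₁ y = 0
      rw [hφ₁, LinearMap.comp_apply, (show φ y = 0 from hy)]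
      rfl
    have hval3 : ∀ y : ↥(LinearMap.ker φ),
        (⟨(y : M), hval2 y⟩ : ↥M₁) ∈ LinearMap.ker φ' := by
      rintro ⟨y, hy⟩
      show φ' _ = 0
      rw [hφ'app]
      funext i
      rw [show φ y = 0 from hy]
      rfl
    set E : ↥(LinearMap.ker φ') ≃ₗ[R] ↥(LinearMap.ker φ) :=
      { toFun := fun x => ⟨((x : ↥M₁) : M), hval x⟩
        invFun := fun y => ⟨⟨(y : M), hval2 y⟩, hval3 y⟩
        map_add' := fun x y => Subtype.ext rfl
        map_smul' := fun c x => Subtype.ext rfl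
        left_inv := fun x => Subtype.ext (Subtype.ext rfl)
        right_inv := fun y => Subtype.ext rfl } with hEdef
    have hmapE : ((N₁.comap (LinearMap.ker φ').subtype).map
        (E : ↥(LinearMap.ker φ') →ₗ[R] ↥(LinearMap.ker φ))) =
        N.comap (LinearMap.ker φ).subtype := by
      ext y
      simp only [Submodule.mem_map, Submodule.mem_comap]
      constructor
      · rintro ⟨z, hz, rfl⟩
        exact hz
      · intro hy
        refine ⟨⟨⟨(y : M), hval2 y⟩, hval3 y⟩, hy, Subtype.ext rfl⟩
    have heq1 : ∀ a' : ℕ, relativeFittingIdeal R M (a'+1) b N =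
        relativeFittingIdeal R ↥M₁ a' b N₁ :=
      fun a' => le_antisymm (one_step_le φ₁ hφ₁s N hNM₁ a' b) (one_step_ge φ₁ hφ₁s N hNM₁ a' b)
    constructor
    · intro hra
      obtain ⟨a', rfl⟩ : ∃ a', a = a' + 1 := ⟨a - 1, by omega⟩
      rw [heq1 a']
      have hIH := (ih ↥M₁ N₁ φ' hφ's hN₁le a' b).1 (by omega)
      rw [hIH]
      have hcongr := relativeFittingIdeal_congr E (a' - r) b
        (N₁.comap (LinearMap.ker φ').subtype)
      rw [hmapE] at hcongr
      rw [show a' + 1 - (r + 1) = a' - r from by omega]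
      exact hcongr
    · intro har
      rcases Nat.eq_zero_or_pos a with rfl | hpos
      · exact one_step_zero φ₁ hφ₁s N hNM₁ b
      · obtain ⟨a', rfl⟩ : ∃ a', a = a' + 1 := ⟨a - 1, by omega⟩
        rw [heq1 a']
        exact (ih ↥M₁ N₁ φ' hφ's hN₁le a' b).2 (by omega)


end FitAux


/-- **Statement 12.** Let `R` be a commutative noetherian ring, `M` a finitely generated
`R`-module, `N` a submodule of `M`, and suppose there is an exact sequence
`0 → M' → M → R^r → 0` of `R`-modules with `N ⊆ M'` (here `M' = ker φ` for a surjection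
`φ : M → R^r`).  Then for all integers `a, b ≥ 0` one has
`Fitt^{(a,b)}_R(M,N) = Fitt^{(a-r,b)}_R(M',N)` if `a ≥ r`, and `Fitt^{(a,b)}_R(M,N) = 0`
if `a < r`. -/
theorem relativeFittingIdeal_eq_of_free_quotient
    (R : Type*) [CommRing R] [IsNoetherianRing R]
    (M : Type*) [AddCommGroup M] [Module R M] [Module.Finite R M]
    (N : Submodule R M) (r : ℕ) (φ : M →ₗ[R] (Fin r → R))
    (hφ : Function.Surjective φ) (hN : N ≤ LinearMap.ker φ) (a b : ℕ) :
    (r ≤ a → relativeFittingIdeal R M a b N =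
        relativeFittingIdeal R (LinearMap.ker φ) (a - r) b
          (N.comap (LinearMap.ker φ).subtype)) ∧
    (a < r → relativeFittingIdeal R M a b N = ⊥) :=
  FitAux.main_aux R r M N φ hφ hN a b
end
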